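/- There exists a universal constant c > 0 such that for every connected hypergraph H on n ≥ 2 vertices, the radio cover time of the simple random walk on H satisfies C̃ ≤ c · h̃_max · log n, where h̃_max is the maximum radio hitting time over all ordered pairs of vertices. -/

import Mathlib

open scoped ENNReal Classical
open Finset

/-- A hypergraph: a finite nonempty family of nonempty hyperedges over a finite vertex set. -/
structure Hypergraph' (V : Type) [Fintype V] [DecidableEq V] where
  edges : Finset (Finset V)
  edges_nonempty : edges.Nonempty
  mem_nonempty : ∀ e ∈ edges, e.Nonempty

namespace Hypergraph'

variable {V : Type} [Fintype V] [DecidableEq V]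

/-- The degree `d(v)` of a vertex: the number of hyperedges containing it. -/
def degV (H : Hypergraph' V) (v : V) : ℕ := (H.edges.filter (fun e => v ∈ e)).card

/-- The rank of a hypergraph: the maximum cardinality of a hyperedge. -/
def rank (H : Hypergraph' V) : ℕ := H.edges.sup Finset.card

/-- Connectivity: every vertex lies in some hyperedge, and any two vertices are joined
by a hyperpath (consecutive vertices share a hyperedge). -/
def Connected (H : Hypergraph' V) : Prop :=
  (∀ v : V, ∃ e ∈ H.edges, v ∈ e) ∧
    ∀ u v : V, Relation.ReflTransGen (fun a b => ∃ e ∈ H.edges, a ∈ e ∧ b ∈ e) u v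

/-- One step of the simple random walk: from vertex `v`, the probability of choosing
hyperedge `p.1` (uniform among the edges containing `v`) and then vertex `p.2`
(uniform inside `p.1`). -/
noncomputable def stepProb (H : Hypergraph' V) (v : V) (p : Finset V × V) : ℝ≥0∞ :=
  if p.1 ∈ H.edges ∧ v ∈ p.1 ∧ p.2 ∈ p.1 then
    ((H.degV v : ℝ≥0∞) * (p.1.card : ℝ≥0∞))⁻¹ else 0

/-- The vertex visited at time `s` along a trajectory `w` (a list of (edge, next vertex)
pairs) started at `v`; `vAt v w 0 = v`. -/
def vAt (v : V) {t : ℕ} (w : Fin t → Finset V × V) : ℕ → V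
  | 0 => v
  | s + 1 => if h : s < t then (w ⟨s, h⟩).2 else v

/-- Probability of a finite trajectory of the simple random walk started at `v`. -/
noncomputable def trajProb (H : Hypergraph' V) (v : V) {t : ℕ}
    (w : Fin t → Finset V × V) : ℝ≥0∞ :=
  ∏ s : Fin t, H.stepProb (vAt v w s) (w s)

/-- Probability that the length-`t` trajectory of the walk started at `v` satisfies `A`. -/
noncomputable def pr (H : Hypergraph' V) (v : V) (t : ℕ)
    (A : (Fin t → Finset V × V) → Prop) : ℝ≥0∞ :=
  ∑ w : Fin t → Finset V × V, if A w then H.trajProb v w else 0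

/-- Expected cover time from `v`: `E[max_u T_v^u] = ∑_t Pr[some vertex unvisited by time t]`. -/
noncomputable def coverFrom (H : Hypergraph' V) (v : V) : ℝ≥0∞ :=
  ∑' t : ℕ, H.pr v t (fun w => ∃ u : V, ∀ s : ℕ, s ≤ t → vAt v w s ≠ u)

/-- The cover time `C` of the hypergraph. -/
noncomputable def coverTime (H : Hypergraph' V) : ℝ≥0∞ := ⨆ v : V, H.coverFrom v

/-- Expected radio cover time from `v`: `u` has heard the walk by time `t` iff `u = X(0)`
or `u ∈ e(s)` for some `s < t`. -/
noncomputable def radioCoverFrom (H : Hypergraph' V) (v : V) : ℝ≥0∞ :=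
  ∑' t : ℕ, H.pr v t (fun w => ∃ u : V, u ≠ v ∧ ∀ s : Fin t, u ∉ (w s).1)

/-- The radio cover time `C̃` of the hypergraph. -/
noncomputable def radioCoverTime (H : Hypergraph' V) : ℝ≥0∞ := ⨆ v : V, H.radioCoverFrom v

/-- The hitting time `h(v,u) = E[inf{t : X(t) = u}]`. -/
noncomputable def hitting (H : Hypergraph' V) (v u : V) : ℝ≥0∞ :=
  ∑' t : ℕ, H.pr v t (fun w => ∀ s : ℕ, s ≤ t → vAt v w s ≠ u)

/-- The radio hitting time `h̃(v,u)`: expected first time by which `u` has heard the walk. -/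
noncomputable def radioHitting (H : Hypergraph' V) (v u : V) : ℝ≥0∞ :=
  ∑' t : ℕ, H.pr v t (fun w => u ≠ v ∧ ∀ s : Fin t, u ∉ (w s).1)

/-- The maximum hitting time `h_max`. -/
noncomputable def maxHitting (H : Hypergraph' V) : ℝ≥0∞ := ⨆ v : V, ⨆ u : V, H.hitting v u

/-- The maximum radio hitting time `h̃_max`. -/
noncomputable def maxRadioHitting (H : Hypergraph' V) : ℝ≥0∞ :=
  ⨆ v : V, ⨆ u : V, H.radioHitting v u

end Hypergraph'

/-!
By Markov's inequality, within `T ≈ 2 h̃_max` steps every vertex hears the walk with probability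
at least `1/2`, whatever the starting vertex, so by the Markov property a vertex is still unheard
after `t` steps with probability at most `2^(-⌊t/T⌋)`. A union bound over the `n` vertices bounds
the probability that the radio cover is not complete at time `t` by `min 1 (n 2^(-⌊t/T⌋))`, and
summing over `t` gives `C̃ ≤ T (⌈log₂ n⌉ + 2) ≤ 18 h̃_max log n`.
-/

lemma ENNReal.tsum_comp_div (T : ℕ) [NeZero T] (g : ℕ → ℝ≥0∞) :
    ∑' t, g (t / T) = T * ∑' k, g k := by
  have hdiv : ∀ x : ℕ × Fin T, (Nat.divModEquiv T).symm x / T = x.1 := fun x => by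
    change (x.1 * T + x.2) / T = x.1
    rw [Nat.add_comm, Nat.add_mul_div_right _ _ (NeZero.pos T), Nat.div_eq_of_lt x.2.isLt, zero_add]
  rw [← (Nat.divModEquiv T).symm.tsum_eq, tsum_congr fun x => congrArg g (hdiv x),
    ENNReal.tsum_prod (f := fun k (_ : Fin T) => g k), ← ENNReal.tsum_mul_left]
  simp

lemma ENNReal.tsum_min_one_mul_inv_two_pow_le {a : ℝ≥0∞} {K : ℕ} (ha : a ≤ 2 ^ K) :
    ∑' k, min 1 (a * 2⁻¹ ^ k) ≤ (K : ℝ≥0∞) + 2 := by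
  have haK : a * 2⁻¹ ^ K ≤ 1 := by
    rw [← ENNReal.inv_pow, ← div_eq_mul_inv]
    exact ENNReal.div_le_of_le_mul (by simpa using ha)
  rw [← ENNReal.summable.sum_add_tsum_nat_add' (f := fun k => min 1 (a * 2⁻¹ ^ k)) (k := K)]
  gcongr
  · calc ∑ k ∈ range K, min 1 (a * 2⁻¹ ^ k) ≤ ∑ _k ∈ range K, 1 :=
          sum_le_sum fun _ _ => min_le_left _ _
      _ = K := by simp
  · calc ∑' j, min 1 (a * 2⁻¹ ^ (j + K)) ≤ ∑' j : ℕ, 2⁻¹ ^ j := by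
          refine ENNReal.tsum_le_tsum fun j => (min_le_right _ _).trans ?_
          calc a * 2⁻¹ ^ (j + K) = 2⁻¹ ^ j * (a * 2⁻¹ ^ K) := by ring
            _ ≤ 2⁻¹ ^ j * 1 := by gcongr
            _ = 2⁻¹ ^ j := mul_one _
      _ = 2 := by rw [ENNReal.tsum_geometric, ENNReal.one_sub_inv_two, inv_inv]

lemma ENNReal.exists_nat_two_mul_le_le_three_mul {x : ℝ≥0∞} (hx : 1 ≤ x) (hx' : x ≠ ⊤) :
    ∃ T : ℕ, 2 * x ≤ T ∧ (T : ℝ≥0∞) ≤ 3 * x := by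
  lift x to NNReal using hx'
  have hx1 : (1 : NNReal) ≤ x := by exact_mod_cast hx
  refine ⟨⌈2 * x⌉₊, by exact_mod_cast Nat.le_ceil _, ?_⟩
  have := Nat.ceil_lt_add_one (by positivity : (0 : NNReal) ≤ 2 * x)
  exact_mod_cast (this.trans_le (by linear_combination hx1)).le

lemma clog_two_add_two_le_mul_log {n : ℕ} (hn : 2 ≤ n) :
    (Nat.clog 2 n : ℝ≥0∞) + 2 ≤ 6 * ENNReal.ofReal (Real.log n) := by
  have hn' : (2 : ℝ) ≤ n := by exact_mod_cast hn
  have hclog : (Nat.clog 2 n : ℝ) < Real.log n / Real.log 2 + 1 := by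
    rw [← Real.natCeil_logb_natCast, ← Real.log_div_log]
    exact Nat.ceil_lt_add_one (Real.logb_nonneg one_lt_two (by linarith))
  have hlog2 : 2 / 3 < Real.log 2 := by linarith [Real.log_two_gt_d9]
  have hlogn : Real.log 2 ≤ Real.log n := Real.log_le_log two_pos hn'
  have hdiv : Real.log n / Real.log 2 ≤ 3 / 2 * Real.log n := by
    rw [div_le_iff₀ (by linarith)]
    nlinarith
  rw [← ENNReal.ofReal_ofNat 6, ← ENNReal.ofReal_mul (by norm_num), ← ENNReal.ofReal_natCast,
    ← ENNReal.ofReal_ofNat 2, ← ENNReal.ofReal_add (by positivity) (by norm_num)]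
  exact ENNReal.ofReal_le_ofReal (by linarith)

namespace Hypergraph'

variable {V : Type} [Fintype V] [DecidableEq V] (H : Hypergraph' V)

lemma Connected.degV_ne_zero {H : Hypergraph' V} (hH : H.Connected) (v : V) : H.degV v ≠ 0 := by
  obtain ⟨e, he, hve⟩ := hH.1 v
  exact (card_pos.mpr ⟨e, mem_filter.mpr ⟨he, hve⟩⟩).ne'

lemma sum_stepProb {v : V} (hv : H.degV v ≠ 0) : ∑ p, H.stepProb v p = 1 := by
  have hedge : ∀ e : Finset V, ∑ x, H.stepProb v (e, x) =
      if e ∈ H.edges.filter (v ∈ ·) then (H.degV v : ℝ≥0∞)⁻¹ else 0 := by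
    intro e
    by_cases he : e ∈ H.edges ∧ v ∈ e
    · have hcard : (#e : ℝ≥0∞) ≠ 0 := by simpa using (H.mem_nonempty e he.1).ne_empty
      simp only [stepProb, he, true_and, mem_filter, and_self, if_true, sum_ite_mem, univ_inter,
        sum_const, nsmul_eq_mul]
      rw [ENNReal.mul_inv (.inr (by simp)) (.inl (by simp)), mul_left_comm,
        ENNReal.mul_inv_cancel hcard (by simp), mul_one]
    · rw [if_neg (by simpa using he)]
      exact sum_eq_zero fun x _ => if_neg (by tauto)
  rw [Fintype.sum_prod_type, Fintype.sum_congr _ _ hedge, sum_ite_mem, univ_inter, sum_const,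
    nsmul_eq_mul]
  exact ENNReal.mul_inv_cancel (by simpa [degV] using hv) (by simp)

omit [Fintype V] [DecidableEq V] in
lemma vAt_cons (v : V) {t : ℕ} (p : Finset V × V) (w : Fin t → Finset V × V) (s : Fin t) :
    vAt v (Fin.cons p w) (s + 1) = vAt p.2 w s := by
  obtain ⟨s, hs⟩ := s
  cases s with
  | zero => simp [vAt]
  | succ r =>
    simp only [vAt]
    rw [dif_pos (by omega), dif_pos (by omega)]
    exact congrArg Prod.snd (Fin.cons_succ (α := fun _ => Finset V × V) p w ⟨r, by omega⟩)

lemma trajProb_cons (v : V) {t : ℕ} (p : Finset V × V) (w : Fin t → Finset V × V) :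
    H.trajProb v (Fin.cons p w) = H.stepProb v p * H.trajProb p.2 w := by
  rw [trajProb, Fin.prod_univ_succ]
  congr 1
  refine prod_congr rfl fun s _ => ?_
  rw [Fin.val_succ, vAt_cons, Fin.cons_succ]

lemma pr_mono (v : V) (t : ℕ) {A B : (Fin t → Finset V × V) → Prop} (h : ∀ w, A w → B w) :
    H.pr v t A ≤ H.pr v t B :=
  sum_le_sum fun w _ => by split_ifs <;> simp_all

lemma pr_zero (v : V) (A : (Fin 0 → Finset V × V) → Prop) :
    H.pr v 0 A = if A finZeroElim then 1 else 0 := by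
  rw [pr, Fintype.sum_unique, Subsingleton.elim default finZeroElim]
  simp [trajProb]

lemma pr_succ (v : V) (t : ℕ) (A : (Fin (t + 1) → Finset V × V) → Prop) :
    H.pr v (t + 1) A = ∑ p, H.stepProb v p * H.pr p.2 t (fun w => A (Fin.cons p w)) := by
  simp only [pr, mul_sum]
  rw [← (Fin.consEquiv fun _ => Finset V × V).sum_comp, Fintype.sum_prod_type]
  refine Fintype.sum_congr _ _ fun p => Fintype.sum_congr _ _ fun w => ?_
  rw [show (Fin.consEquiv fun _ => Finset V × V) (p, w) = Fin.cons p w from rfl, trajProb_cons,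
    mul_ite, mul_zero]

lemma pr_true (hd : ∀ v, H.degV v ≠ 0) (v : V) (t : ℕ) : H.pr v t (fun _ => True) = 1 := by
  induction t generalizing v with
  | zero => simp [pr_zero]
  | succ t ih => simp only [pr_succ, ih, mul_one, H.sum_stepProb (hd v)]

lemma pr_le_one (hd : ∀ v, H.degV v ≠ 0) (v : V) (t : ℕ) (A : (Fin t → Finset V × V) → Prop) :
    H.pr v t A ≤ 1 :=
  H.pr_true hd v t ▸ H.pr_mono v t fun _ _ => trivial

lemma pr_exists_le_sum {ι : Type*} [Fintype ι] (v : V) (t : ℕ)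
    (A : ι → (Fin t → Finset V × V) → Prop) :
    H.pr v t (fun w => ∃ i, A i w) ≤ ∑ i, H.pr v t (A i) := by
  simp only [pr]
  rw [sum_comm]
  refine sum_le_sum fun w _ => ?_
  split_ifs with h
  · obtain ⟨i, hi⟩ := h
    calc H.trajProb v w = if A i w then H.trajProb v w else 0 := (if_pos hi).symm
      _ ≤ ∑ j, if A j w then H.trajProb v w else 0 :=
        single_le_sum (f := fun j => if A j w then H.trajProb v w else 0)
          (fun _ _ => zero_le) (mem_univ i)
  · exact zero_le

/-- Unlike `radioHitting`, this does not count `u = v` as heard at time `0`. -/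
noncomputable def unheardProb (v u : V) (t : ℕ) : ℝ≥0∞ :=
  H.pr v t (fun w => ∀ s, u ∉ (w s).1)

lemma unheardProb_zero (v u : V) : H.unheardProb v u 0 = 1 := by
  rw [unheardProb, pr_zero, if_pos finZeroElim]

lemma unheardProb_succ (v u : V) (t : ℕ) :
    H.unheardProb v u (t + 1) =
      ∑ p, H.stepProb v p * if u ∈ p.1 then 0 else H.unheardProb p.2 u t := by
  rw [unheardProb, pr_succ]
  refine Fintype.sum_congr _ _ fun p => ?_
  simp only [Fin.forall_fin_succ, Fin.cons_zero, Fin.cons_succ]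
  split_ifs with hu
  · simp [pr, hu]
  · simp only [hu, not_false_eq_true, true_and, unheardProb]

lemma unheardProb_self_succ (u : V) (t : ℕ) : H.unheardProb u u (t + 1) = 0 := by
  rw [unheardProb_succ]
  refine sum_eq_zero fun p _ => ?_
  split_ifs with hu
  · exact mul_zero _
  · simp [stepProb, hu]

lemma unheardProb_le_one (hd : ∀ v, H.degV v ≠ 0) (v u : V) (t : ℕ) :
    H.unheardProb v u t ≤ 1 :=
  H.pr_le_one hd v t _

lemma unheardProb_antitone (hd : ∀ v, H.degV v ≠ 0) (v u : V) :
    Antitone (H.unheardProb v u) := by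
  refine antitone_nat_of_succ_le fun t => ?_
  induction t generalizing v with
  | zero => simpa only [unheardProb_zero] using H.unheardProb_le_one hd v u 1
  | succ t ih =>
    rw [unheardProb_succ, unheardProb_succ _ _ _ t]
    refine sum_le_sum fun p _ => mul_le_mul_right ?_ _
    split_ifs
    exacts [le_rfl, ih p.2]

/-- The Markov property of the walk at time `s`. -/
lemma unheardProb_add_le {u : V} {t : ℕ} {M : ℝ≥0∞} (hM : ∀ x, H.unheardProb x u t ≤ M)
    (v : V) (s : ℕ) : H.unheardProb v u (s + t) ≤ M * H.unheardProb v u s := by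
  induction s generalizing v with
  | zero => simpa only [zero_add, unheardProb_zero, mul_one] using hM v
  | succ s ih =>
    rw [Nat.add_right_comm, unheardProb_succ, unheardProb_succ, mul_sum]
    refine sum_le_sum fun p _ => ?_
    split_ifs
    · simp
    · calc H.stepProb v p * H.unheardProb p.2 u (s + t)
          ≤ H.stepProb v p * (M * H.unheardProb p.2 u s) := mul_le_mul_right (ih p.2) _
        _ = M * (H.stepProb v p * H.unheardProb p.2 u s) := mul_left_comm _ _ _

lemma unheardProb_mul_le_pow {u : V} {t : ℕ} {M : ℝ≥0∞} (hM : ∀ x, H.unheardProb x u t ≤ M)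
    (v : V) (k : ℕ) : H.unheardProb v u (k * t) ≤ M ^ k := by
  induction k with
  | zero => simp [unheardProb_zero]
  | succ k ih =>
    calc H.unheardProb v u ((k + 1) * t) ≤ M * H.unheardProb v u (k * t) := by
          rw [Nat.succ_mul]; exact H.unheardProb_add_le hM v _
      _ ≤ M * M ^ k := mul_le_mul_right ih _
      _ = M ^ (k + 1) := (pow_succ' _ _).symm

lemma unheardProb_le_inv_two_pow (hd : ∀ v, H.degV v ≠ 0) {u : V} {T : ℕ}
    (hT : ∀ x, H.unheardProb x u T ≤ 2⁻¹) (v : V) (t : ℕ) :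
    H.unheardProb v u t ≤ 2⁻¹ ^ (t / T) :=
  (H.unheardProb_antitone hd v u (Nat.div_mul_le_self t T)).trans
    (H.unheardProb_mul_le_pow hT v _)

lemma radioHitting_eq_tsum_unheardProb {v u : V} (h : u ≠ v) :
    H.radioHitting v u = ∑' t, H.unheardProb v u t := by
  simp only [radioHitting, unheardProb, h, ne_eq, not_false_eq_true, true_and]

lemma one_le_radioHitting {v u : V} (h : u ≠ v) : 1 ≤ H.radioHitting v u := by
  rw [H.radioHitting_eq_tsum_unheardProb h, ← H.unheardProb_zero v u]
  exact ENNReal.le_tsum 0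

lemma radioHitting_le_maxRadioHitting (v u : V) : H.radioHitting v u ≤ H.maxRadioHitting :=
  le_iSup₂ (f := fun v u => H.radioHitting v u) v u

lemma one_le_maxRadioHitting (hV : 2 ≤ Fintype.card V) : 1 ≤ H.maxRadioHitting := by
  obtain ⟨u, v, huv⟩ := Fintype.exists_pair_of_one_lt_card hV
  exact (H.one_le_radioHitting huv).trans (H.radioHitting_le_maxRadioHitting v u)

lemma nat_mul_unheardProb_le_radioHitting (hd : ∀ v, H.degV v ≠ 0) {v u : V} (h : u ≠ v)
    (T : ℕ) : T * H.unheardProb v u T ≤ H.radioHitting v u := by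
  rw [H.radioHitting_eq_tsum_unheardProb h]
  calc (T : ℝ≥0∞) * H.unheardProb v u T = ∑ _t ∈ range T, H.unheardProb v u T := by simp
    _ ≤ ∑ t ∈ range T, H.unheardProb v u t :=
      sum_le_sum fun t ht => H.unheardProb_antitone hd v u (mem_range.mp ht).le
    _ ≤ ∑' t, H.unheardProb v u t := ENNReal.sum_le_tsum _

lemma unheardProb_le_inv_two (hd : ∀ v, H.degV v ≠ 0) {T : ℕ} (hT0 : T ≠ 0)
    (hT : 2 * H.maxRadioHitting ≤ T) (v u : V) : H.unheardProb v u T ≤ 2⁻¹ := by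
  obtain rfl | huv := eq_or_ne u v
  · obtain ⟨t, rfl⟩ := Nat.exists_eq_succ_of_ne_zero hT0
    simp [unheardProb_self_succ]
  have hmarkov : (T : ℝ≥0∞) * (H.unheardProb v u T * 2) ≤ T * 1 :=
    calc (T : ℝ≥0∞) * (H.unheardProb v u T * 2) = 2 * (T * H.unheardProb v u T) := by ring
      _ ≤ 2 * H.maxRadioHitting :=
        mul_le_mul_right ((H.nat_mul_unheardProb_le_radioHitting hd huv T).trans
          (H.radioHitting_le_maxRadioHitting v u)) _
      _ ≤ T * 1 := (mul_one (T : ℝ≥0∞)).symm ▸ hT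
  rw [ENNReal.le_inv_iff_mul_le]
  exact (ENNReal.mul_le_mul_iff_right (by exact_mod_cast hT0) (by simp)).mp hmarkov

lemma radioCoverTime_le (hd : ∀ v, H.degV v ≠ 0) {T K : ℕ} (hT0 : T ≠ 0)
    (hT : 2 * H.maxRadioHitting ≤ T) (hK : Fintype.card V ≤ 2 ^ K) :
    H.radioCoverTime ≤ T * ((K : ℝ≥0∞) + 2) := by
  have : NeZero T := ⟨hT0⟩
  have hunheard : ∀ v t, H.pr v t (fun w => ∃ u, u ≠ v ∧ ∀ s, u ∉ (w s).1) ≤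
      min 1 ((Fintype.card V : ℝ≥0∞) * 2⁻¹ ^ (t / T)) := fun v t =>
    le_min (H.pr_le_one hd v t _) <| calc
      _ ≤ ∑ u, H.pr v t (fun w => u ≠ v ∧ ∀ s, u ∉ (w s).1) := H.pr_exists_le_sum v t _
      _ ≤ ∑ u, H.unheardProb v u t := sum_le_sum fun u _ => H.pr_mono v t fun _ hw => hw.2
      _ ≤ ∑ _u : V, 2⁻¹ ^ (t / T) := sum_le_sum fun u _ =>
        H.unheardProb_le_inv_two_pow hd (H.unheardProb_le_inv_two hd hT0 hT · u) v t
      _ = Fintype.card V * 2⁻¹ ^ (t / T) := by simp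
  refine iSup_le fun v => ?_
  calc H.radioCoverFrom v ≤ ∑' t, min 1 ((Fintype.card V : ℝ≥0∞) * 2⁻¹ ^ (t / T)) :=
        ENNReal.tsum_le_tsum (hunheard v)
    _ = T * ∑' k, min 1 ((Fintype.card V : ℝ≥0∞) * 2⁻¹ ^ k) :=
        ENNReal.tsum_comp_div T fun k => min 1 ((Fintype.card V : ℝ≥0∞) * 2⁻¹ ^ k)
    _ ≤ T * ((K : ℝ≥0∞) + 2) :=
        mul_le_mul_right (ENNReal.tsum_min_one_mul_inv_two_pow_le (by exact_mod_cast hK)) _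

end Hypergraph'

/-- Matthews' bound for the radio cover time. There is a universal
constant `c > 0` such that for every connected hypergraph on `n ≥ 2` vertices,
`C̃ ≤ c · h̃_max · log n`. -/
theorem radioCover_le_maxRadioHitting_mul_log :
    ∃ c : ℝ, 0 < c ∧
      ∀ (V : Type) [Fintype V] [DecidableEq V] (H : Hypergraph' V),
        H.Connected → 2 ≤ Fintype.card V →
        H.radioCoverTime ≤
          ENNReal.ofReal c * H.maxRadioHitting *
            ENNReal.ofReal (Real.log (Fintype.card V)) := by
  refine ⟨18, by norm_num, fun V _ _ H hH hV => ?_⟩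
  obtain hmax | hmax := eq_or_ne H.maxRadioHitting ⊤
  · have hlog : 0 < Real.log (Fintype.card V) := Real.log_pos (by exact_mod_cast hV)
    simp [hmax, hlog]
  have hmax1 := H.one_le_maxRadioHitting hV
  obtain ⟨T, hT2, hT3⟩ := ENNReal.exists_nat_two_mul_le_le_three_mul hmax1 hmax
  have hT0 : T ≠ 0 := by
    rintro rfl
    simp_all
  calc H.radioCoverTime ≤ T * ((Nat.clog 2 (Fintype.card V) : ℝ≥0∞) + 2) :=
        H.radioCoverTime_le hH.degV_ne_zero hT0 hT2 (Nat.le_pow_clog one_lt_two _)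
    _ ≤ 3 * H.maxRadioHitting * (6 * ENNReal.ofReal (Real.log (Fintype.card V))) :=
        mul_le_mul' hT3 (clog_two_add_two_le_mul_log hV)
    _ = ENNReal.ofReal 18 * H.maxRadioHitting * ENNReal.ofReal (Real.log (Fintype.card V)) := by
        rw [ENNReal.ofReal_ofNat]; ring
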